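/- Every entry of the array is squarefree: for all m ≥ 0 and n ≥ 0, a_{m,n} is a squarefree positive integer. -/

import Mathlib

/-- `Z a b = a*b / gcd(a,b)^2`. -/
def Zfun (a b : ℕ) : ℕ := a * b / Nat.gcd a b ^ 2

/-- The array: `ent 0 n` is the `n`-th prime (0-indexed), and
`ent (m+1) n = Z (ent m n) (ent m (n+1))`. -/
noncomputable def ent : ℕ → ℕ → ℕ
  | 0, n => Nat.nth Nat.Prime n
  | m + 1, n => Zfun (ent m n) (ent m (n + 1))

/-- The left edge `d_m`. -/
noncomputable def dseq (m : ℕ) : ℕ := ent m 0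

lemma Zfun_eq_div_gcd_mul_div_gcd (a b : ℕ) :
    Zfun a b = a / Nat.gcd a b * (b / Nat.gcd a b) := by
  rw [Zfun, Nat.div_mul_div_comm (Nat.gcd_dvd_left a b) (Nat.gcd_dvd_right a b), sq]

lemma Squarefree.Zfun {a b : ℕ} (ha : Squarefree a) (hb : Squarefree b) :
    Squarefree (Zfun a b) := by
  have hgcd : 0 < Nat.gcd a b := Nat.gcd_pos_of_pos_left b (Nat.pos_of_ne_zero ha.ne_zero)
  rw [Zfun_eq_div_gcd_mul_div_gcd, Nat.squarefree_mul (Nat.coprime_div_gcd_div_gcd hgcd)]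
  exact ⟨ha.squarefree_of_dvd (Nat.div_dvd_of_dvd (Nat.gcd_dvd_left a b)),
    hb.squarefree_of_dvd (Nat.div_dvd_of_dvd (Nat.gcd_dvd_right a b))⟩

lemma squarefree_ent (m n : ℕ) : Squarefree (ent m n) := by
  induction m generalizing n with
  | zero => exact (Nat.prime_nth_prime n).squarefree
  | succ m ih => exact (ih n).Zfun (ih (n + 1))

theorem ent_squarefree (m n : ℕ) : 0 < ent m n ∧ Squarefree (ent m n) :=
  ⟨Nat.pos_of_ne_zero (squarefree_ent m n).ne_zero, squarefree_ent m n⟩
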